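/- For k even, k ≥ 2, the number of paths of length k starting and ending at the same level, with maximum level 0, consisting of up-steps (+1), down-steps (−1) and exactly two flat steps both occurring at the same level, equals k·2^{k−3}. -/

import Mathlib

/-!
A path is determined by its sequence of steps `s ∈ {-1, 0, 1}^k`, the condition `max = 0` fixing
the vertical shift; the step sequences that occur are those with sum `0`, zeros exactly at two
positions `u < v`, and sum `0` strictly between `u` and `v`. For `d = v - u - 1` the `±1` steps
strictly inside `(u, v)` and outside `[u, v]` then form two independent balanced words, of lengths
`d` and `k - 2 - d`, so with `b(2e) = C(2e, e)`, `b(2e + 1) = 0`,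
`|Γ| = ∑_d (k - 1 - d) b(d) b(k - 2 - d)`. The symmetry `d ↔ k - 2 - d` replaces the weight
`k - 1 - d` by its average `k / 2`, and `∑_d b(d) b(k - 2 - d) = 2^(k - 2)` is the classical
convolution of central binomial coefficients, which follows from the recurrence
`(n + 2) b(n + 2) = 4 (n + 1) b(n)`.
-/

/-- The step `u` of the path `γ` is a flat step. -/
def IsFlatStep {k : ℕ} (γ : Fin (k + 1) → ℤ) (u : Fin k) : Prop :=
  γ u.succ = γ u.castSucc

/-- `γ` is a closed path of length `k` with steps in {-1,0,1}, maximum level `0`,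
having exactly two flat steps, both at the same level, all other steps of size ±1. -/
def IsGammaTwoFlat (k : ℕ) (γ : Fin (k + 1) → ℤ) : Prop :=
  γ 0 = γ (Fin.last k) ∧
  (∀ u : Fin k, |γ u.succ - γ u.castSucc| ≤ 1) ∧
  (∀ u, γ u ≤ 0) ∧ (∃ u, γ u = 0) ∧
  ∃ u v : Fin k, u ≠ v ∧ IsFlatStep γ u ∧ IsFlatStep γ v ∧
    γ u.castSucc = γ v.castSucc ∧
    ∀ w : Fin k, IsFlatStep γ w → w = u ∨ w = v

open Finset

namespace LatticePath

/-- The number of `±1` words of length `n` with sum `0`. -/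
def balancedCount (n : ℕ) : ℕ := if Even n then n.choose (n / 2) else 0

lemma balancedCount_one : balancedCount 1 = 0 := by simp [balancedCount]

lemma balancedCount_add_two (n : ℕ) :
    (n + 2) * balancedCount (n + 2) = 4 * (n + 1) * balancedCount n := by
  rcases Nat.even_or_odd n with ⟨e, rfl⟩ | hodd
  · have h := Nat.succ_mul_centralBinom_succ e
    rw [Nat.centralBinom_eq_two_mul_choose, Nat.centralBinom_eq_two_mul_choose] at h
    have he : Even (e + e + 2) := ⟨e + 1, by ring⟩
    rw [balancedCount, balancedCount, if_pos he, if_pos ⟨e, rfl⟩,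
      show (e + e + 2) / 2 = e + 1 by omega, show (e + e) / 2 = e by omega,
      show e + e + 2 = 2 * (e + 1) by ring, show e + e = 2 * e by ring]
    linear_combination 2 * h
  · have hodd2 : ¬Even (n + 2) := by simpa [Nat.even_add] using Nat.not_even_iff_odd.2 hodd
    simp [balancedCount, hodd2, Nat.not_even_iff_odd.2 hodd]

lemma card_filter_powerset_two_mul_card_eq {α : Type*} (T : Finset α) :
    #{A ∈ T.powerset | 2 * #A = #T} = balancedCount #T := by
  rw [balancedCount]
  split_ifs with h
  · rw [← card_powersetCard, powersetCard_eq_filter]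
    congr 1
    exact filter_congr fun A _ => by obtain ⟨e, he⟩ := h; omega
  · rw [card_eq_zero, filter_eq_empty_iff]
    exact fun A _ hA => h ⟨#A, by omega⟩

lemma card_filter_powerset_union {α : Type*} [DecidableEq α] {M O : Finset α} (h : Disjoint M O)
    (p q : Finset α → Prop) [DecidablePred p] [DecidablePred q] :
    #{A ∈ (M ∪ O).powerset | p (A ∩ M) ∧ q (A ∩ O)}
      = #{B ∈ M.powerset | p B} * #{C ∈ O.powerset | q C} := by
  have hM : ∀ {B C}, B ⊆ M → C ⊆ O → (B ∪ C) ∩ M = B := fun hB hC => by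
    rw [union_inter_distrib_right, inter_eq_left.2 hB,
      disjoint_iff_inter_eq_empty.1 (h.symm.mono_left hC), union_empty]
  have hO : ∀ {B C}, B ⊆ M → C ⊆ O → (B ∪ C) ∩ O = C := fun hB hC => by
    rw [union_inter_distrib_right, inter_eq_left.2 hC,
      disjoint_iff_inter_eq_empty.1 (h.mono_left hB), empty_union]
  rw [← card_product]
  refine card_nbij' (fun A => (A ∩ M, A ∩ O)) (fun BC => BC.1 ∪ BC.2) ?_ ?_ ?_ ?_
  · intro A hA
    simp only [coe_filter, mem_powerset, Set.mem_ofPred_eq] at hA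
    simp only [coe_product, coe_filter, mem_powerset, Set.mem_prod, Set.mem_ofPred_eq]
    exact ⟨⟨inter_subset_right, hA.2.1⟩, inter_subset_right, hA.2.2⟩
  · rintro ⟨B, C⟩ hBC
    simp only [coe_product, coe_filter, mem_powerset, Set.mem_prod, Set.mem_ofPred_eq] at hBC
    simp only [coe_filter, mem_powerset, Set.mem_ofPred_eq]
    rw [hM hBC.1.1 hBC.2.1, hO hBC.1.1 hBC.2.1]
    exact ⟨union_subset_union hBC.1.1 hBC.2.1, hBC.1.2, hBC.2.2⟩
  · intro A hA
    simp only [coe_filter, mem_powerset, Set.mem_ofPred_eq] at hA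
    change A ∩ M ∪ A ∩ O = A
    rw [← inter_union_distrib_left, inter_eq_left.2 hA.1]
  · rintro ⟨B, C⟩ hBC
    simp only [coe_product, coe_filter, mem_powerset, Set.mem_prod, Set.mem_ofPred_eq] at hBC
    change ((B ∪ C) ∩ M, (B ∪ C) ∩ O) = (B, C)
    rw [hM hBC.1.1 hBC.2.1, hO hBC.1.1 hBC.2.1]

lemma sum_antidiagonal_snd_mul (f : ℕ → ℕ) (n : ℕ) :
    ∑ p ∈ antidiagonal n, p.2 * (f p.1 * f p.2)
      = ∑ p ∈ antidiagonal n, p.1 * (f p.1 * f p.2) := by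
  rw [← Nat.sum_antidiagonal_swap]
  exact sum_congr rfl fun p _ => by simp only [Prod.fst_swap, Prod.snd_swap]; ring

lemma two_mul_sum_antidiagonal_fst_mul (f : ℕ → ℕ) (n : ℕ) :
    2 * ∑ p ∈ antidiagonal n, p.1 * (f p.1 * f p.2)
      = n * ∑ p ∈ antidiagonal n, f p.1 * f p.2 := by
  calc 2 * ∑ p ∈ antidiagonal n, p.1 * (f p.1 * f p.2)
      = ∑ p ∈ antidiagonal n, (p.1 + p.2) * (f p.1 * f p.2) := by
        rw [two_mul]; nth_rw 2 [← sum_antidiagonal_snd_mul]; rw [← sum_add_distrib]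
        simp only [add_mul]
    _ = n * ∑ p ∈ antidiagonal n, f p.1 * f p.2 := by
        rw [mul_sum]; exact sum_congr rfl fun p hp => by rw [mem_antidiagonal.1 hp]

lemma sum_antidiagonal_balancedCount_add_two (n : ℕ) :
    ∑ p ∈ antidiagonal (n + 2), balancedCount p.1 * balancedCount p.2
      = 4 * ∑ p ∈ antidiagonal n, balancedCount p.1 * balancedCount p.2 := by
  -- weighting by the first index lets `balancedCount_add_two` act on the shifted sum
  have hshift : ∑ p ∈ antidiagonal (n + 2), p.1 * (balancedCount p.1 * balancedCount p.2)
      = 4 * ∑ p ∈ antidiagonal n, (p.1 + 1) * (balancedCount p.1 * balancedCount p.2) := by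
    rw [Nat.sum_antidiagonal_succ, Nat.sum_antidiagonal_succ, mul_sum]
    simp only [zero_add, zero_mul, balancedCount_one, mul_zero]
    refine sum_congr rfl fun p _ => ?_
    rw [← mul_assoc, balancedCount_add_two]
    ring
  have h1 := two_mul_sum_antidiagonal_fst_mul balancedCount n
  have h2 := two_mul_sum_antidiagonal_fst_mul balancedCount (n + 2)
  simp only [add_mul, one_mul, sum_add_distrib] at hshift
  refine Nat.eq_of_mul_eq_mul_left (show 0 < n + 2 by omega) ?_
  linarith

lemma sum_antidiagonal_balancedCount_two_mul (m : ℕ) :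
    ∑ p ∈ antidiagonal (2 * m), balancedCount p.1 * balancedCount p.2 = 4 ^ m := by
  induction m with
  | zero => simp [balancedCount]
  | succ m ih => rw [mul_add_one, sum_antidiagonal_balancedCount_add_two, ih, pow_succ']

lemma sum_range_sum_range_eq_sum_mul (f : ℕ → ℕ) (k : ℕ) :
    ∑ v ∈ range k, ∑ d ∈ range v, f d = ∑ d ∈ range k, (k - 1 - d) * f d := by
  induction k with
  | zero => simp
  | succ k ih =>
    rw [sum_range_succ, ih, sum_range_succ _ k, Nat.add_sub_cancel, Nat.sub_self, zero_mul,
      add_zero, ← sum_add_distrib]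
    refine sum_congr rfl fun d hd => ?_
    have := mem_range.1 hd
    rw [show k - d = k - 1 - d + 1 by omega, add_one_mul]

lemma sum_fin_pairs_lt_eq_sum_range (f : ℕ → ℕ) (k : ℕ) :
    ∑ p : Fin k × Fin k with p.1 < p.2, f ((p.2 : ℕ) - p.1 - 1)
      = ∑ d ∈ range k, (k - 1 - d) * f d := by
  have hinner : ∀ v : Fin k, ∑ u : Fin k, (if u < v then f ((v : ℕ) - u - 1) else 0)
      = ∑ d ∈ range v, f d := by
    intro v
    simp_rw [Fin.lt_def]
    rw [Fin.sum_univ_eq_sum_range (fun u => if u < (v : ℕ) then f ((v : ℕ) - u - 1) else 0),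
      ← sum_filter, show (range k).filter (· < (v : ℕ)) = range v by
        ext; simp only [mem_filter, mem_range]; omega, ← sum_range_reflect]
    exact sum_congr rfl fun d hd => by
      have := mem_range.1 hd
      rw [show (v : ℕ) - (v - 1 - d) - 1 = d by omega]
  rw [sum_filter, Fintype.sum_prod_type, sum_comm, ← sum_range_sum_range_eq_sum_mul]
  simp only [hinner]
  exact Fin.sum_univ_eq_sum_range (fun v => ∑ d ∈ range v, f d) k

/-- The term `d` counts the step sequences whose two flat steps are `d + 1` apart. -/
def twoFlatCount (k : ℕ) : ℕ :=
  ∑ d ∈ range k, (k - 1 - d) * (balancedCount d * balancedCount (k - 2 - d))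

lemma two_mul_twoFlatCount_add_two (n : ℕ) :
    2 * twoFlatCount (n + 2)
      = (n + 2) * ∑ p ∈ antidiagonal n, balancedCount p.1 * balancedCount p.2 := by
  have hrange : twoFlatCount (n + 2)
      = ∑ p ∈ antidiagonal n, (p.2 + 1) * (balancedCount p.1 * balancedCount p.2) := by
    rw [twoFlatCount, sum_range_succ, Nat.sum_antidiagonal_eq_sum_range_succ
      (fun i j => (j + 1) * (balancedCount i * balancedCount j)),
      show n + 2 - 1 - (n + 1) = 0 by omega, zero_mul, add_zero]
    exact sum_congr rfl fun d hd => by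
      have := mem_range.1 hd
      rw [show n + 2 - 1 - d = n - d + 1 by omega, show n + 2 - 2 - d = n - d by omega]
  rw [hrange]
  simp only [add_one_mul, sum_add_distrib, sum_antidiagonal_snd_mul, mul_add,
    two_mul_sum_antidiagonal_fst_mul]
  ring

variable {k : ℕ}

lemma partialSum_eq_sum_filter {M : Type*} [AddCommMonoid M] (s : Fin k → M) (j : Fin (k + 1)) :
    Fin.partialSum s j = ∑ i with i.val < (j : ℕ), s i :=
  List.sum_take_ofFn s j

lemma partialSum_last {M : Type*} [AddCommMonoid M] (s : Fin k → M) :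
    Fin.partialSum s (Fin.last k) = ∑ i, s i := by
  rw [partialSum_eq_sum_filter, filter_true_of_mem fun i _ => i.isLt]

lemma partialSum_castSucc_sub_partialSum_castSucc {M : Type*} [AddCommGroup M] (s : Fin k → M)
    {u v : Fin k} (h : u ≤ v) :
    Fin.partialSum s v.castSucc - Fin.partialSum s u.castSucc = ∑ i ∈ Ico u v, s i := by
  rw [Fin.le_def] at h
  rw [partialSum_eq_sum_filter, partialSum_eq_sum_filter, sub_eq_iff_eq_add', ← sum_union]
  · congr 1
    ext i
    simp only [mem_filter, mem_univ, true_and, mem_union, mem_Ico, Fin.val_castSucc, Fin.le_def,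
      Fin.lt_def]
    omega
  · rw [disjoint_left]
    intro i
    simp only [mem_filter, mem_univ, true_and, mem_Ico, Fin.val_castSucc, Fin.le_def]
    omega

def steps (γ : Fin (k + 1) → ℤ) (i : Fin k) : ℤ := γ i.succ - γ i.castSucc

lemma isFlatStep_iff_steps_eq_zero {γ : Fin (k + 1) → ℤ} {i : Fin k} :
    IsFlatStep γ i ↔ steps γ i = 0 :=
  sub_eq_zero.symm

lemma eq_add_partialSum_steps (γ : Fin (k + 1) → ℤ) (j : Fin (k + 1)) :
    γ j = γ 0 + Fin.partialSum (steps γ) j := by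
  induction j using Fin.induction with
  | zero => simp
  | succ i ih => rw [Fin.partialSum_succ, ← add_assoc, ← ih, steps]; ring

lemma sum_steps (γ : Fin (k + 1) → ℤ) : ∑ i, steps γ i = γ (Fin.last k) - γ 0 := by
  rw [← partialSum_last, eq_add_partialSum_steps γ (Fin.last k)]
  ring

lemma sum_Ico_steps (γ : Fin (k + 1) → ℤ) {u v : Fin k} (h : u ≤ v) :
    ∑ i ∈ Ico u v, steps γ i = γ v.castSucc - γ u.castSucc := by
  rw [← partialSum_castSucc_sub_partialSum_castSucc _ h, eq_add_partialSum_steps γ v.castSucc,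
    eq_add_partialSum_steps γ u.castSucc]
  ring

lemma steps_injOn :
    Set.InjOn steps {γ : Fin (k + 1) → ℤ | (∀ j, γ j ≤ 0) ∧ ∃ j, γ j = 0} := by
  rintro γ ⟨hγ, j, hj⟩ γ' ⟨hγ', j', hj'⟩ h
  have hshift : ∀ i, γ i - γ' i = γ 0 - γ' 0 := fun i => by
    rw [eq_add_partialSum_steps γ i, eq_add_partialSum_steps γ' i, h]
    ring
  funext i
  linarith [hshift i, hshift j, hshift j', hγ j', hγ' j]

def normalizedPath (s : Fin k → ℤ) (j : Fin (k + 1)) : ℤ :=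
  Fin.partialSum s j - univ.sup' univ_nonempty (Fin.partialSum s)

lemma steps_normalizedPath (s : Fin k → ℤ) : steps (normalizedPath s) = s := by
  funext i
  simp [steps, normalizedPath, Fin.partialSum_succ]

def IsTwoFlatSteps (s : Fin k → ℤ) : Prop :=
  (∀ i, |s i| ≤ 1) ∧ ∑ i, s i = 0 ∧
    ∃ u v, u < v ∧ (∀ w, s w = 0 ↔ w = u ∨ w = v) ∧ ∑ i ∈ Ioo u v, s i = 0

lemma sum_Ico_eq_sum_Ioo {M : Type*} [AddCommMonoid M] {s : Fin k → M} {u v : Fin k} (h : u < v)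
    (hu : s u = 0) :
    ∑ i ∈ Ico u v, s i = ∑ i ∈ Ioo u v, s i := by
  rw [← sum_Ioo_add_eq_sum_Ico h, hu, add_zero]

lemma isTwoFlatSteps_steps {γ : Fin (k + 1) → ℤ} (hγ : IsGammaTwoFlat k γ) :
    IsTwoFlatSteps (steps γ) := by
  obtain ⟨hclosed, hbound, -, -, u, v, huv, hu, hv, hlevel, honly⟩ := hγ
  refine ⟨hbound, by rw [sum_steps, hclosed, sub_self], ?_⟩
  wlog h : u < v generalizing u v
  · exact this v u huv.symm hv hu hlevel.symm (fun w hw => (honly w hw).symm)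
      (huv.lt_or_gt.resolve_left h)
  refine ⟨u, v, h, fun w => ?_, ?_⟩
  · rw [← isFlatStep_iff_steps_eq_zero]
    exact ⟨honly w, by rintro (rfl | rfl) <;> assumption⟩
  · rw [← sum_Ico_eq_sum_Ioo h (isFlatStep_iff_steps_eq_zero.1 hu), sum_Ico_steps γ h.le,
      hlevel, sub_self]

lemma isGammaTwoFlat_normalizedPath {s : Fin k → ℤ} (hs : IsTwoFlatSteps s) :
    IsGammaTwoFlat k (normalizedPath s) := by
  obtain ⟨hbound, hsum, u, v, huv, hzero, hmid⟩ := hs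
  have hsteps := steps_normalizedPath s
  have hflat : ∀ w, IsFlatStep (normalizedPath s) w ↔ s w = 0 := fun w => by
    rw [isFlatStep_iff_steps_eq_zero, hsteps]
  refine ⟨?_, fun i => ?_, fun j => ?_, ?_, u, v, huv.ne, (hflat u).2 ((hzero u).2 (.inl rfl)),
    (hflat v).2 ((hzero v).2 (.inr rfl)), ?_, fun w hw => (hzero w).1 ((hflat w).1 hw)⟩
  · have := sum_steps (normalizedPath s)
    rw [hsteps, hsum] at this
    linarith
  · change |steps _ i| ≤ 1
    rw [hsteps]
    exact hbound i
  · exact sub_nonpos.2 (le_sup' _ (mem_univ j))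
  · obtain ⟨j, -, hj⟩ := exists_mem_eq_sup' univ_nonempty (Fin.partialSum s)
    exact ⟨j, by rw [normalizedPath, ← hj, sub_self]⟩
  · have := sum_Ico_steps (normalizedPath s) huv.le
    rw [hsteps, sum_Ico_eq_sum_Ioo huv ((hzero u).2 (.inl rfl)), hmid] at this
    linarith

lemma image_steps_setOf_isGammaTwoFlat :
    steps '' {γ | IsGammaTwoFlat k γ} = {s : Fin k → ℤ | IsTwoFlatSteps s} := by
  ext s
  refine ⟨?_, fun hs => ⟨normalizedPath s, isGammaTwoFlat_normalizedPath hs,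
    steps_normalizedPath s⟩⟩
  rintro ⟨γ, hγ, rfl⟩
  exact isTwoFlatSteps_steps hγ

lemma ncard_isGammaTwoFlat_eq_ncard_isTwoFlatSteps :
    {γ | IsGammaTwoFlat k γ}.ncard = {s : Fin k → ℤ | IsTwoFlatSteps s}.ncard := by
  rw [← image_steps_setOf_isGammaTwoFlat]
  refine (Set.InjOn.ncard_image (steps_injOn.mono fun γ hγ => ?_)).symm
  exact ⟨hγ.2.2.1, hγ.2.2.2.1⟩

def signSteps (u v : Fin k) (A : Finset (Fin k)) (i : Fin k) : ℤ :=
  if i ∈ A then 1 else if i = u ∨ i = v then 0 else -1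

lemma signSteps_eq_one_iff {u v : Fin k} {A : Finset (Fin k)} {i : Fin k} :
    signSteps u v A i = 1 ↔ i ∈ A := by
  unfold signSteps
  split_ifs <;> simp_all

lemma signSteps_eq_zero_iff {u v : Fin k} {A : Finset (Fin k)} (hu : u ∉ A) (hv : v ∉ A)
    (w : Fin k) : signSteps u v A w = 0 ↔ w = u ∨ w = v := by
  unfold signSteps
  by_cases hw : w ∈ A
  · simp only [if_pos hw, one_ne_zero, false_iff]
    rintro (rfl | rfl) <;> contradiction
  · simp only [if_neg hw]
    split_ifs with h <;> simp [h]

lemma sum_signSteps {u v : Fin k} {A T : Finset (Fin k)} (hu : u ∉ T) (hv : v ∉ T) :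
    ∑ i ∈ T, signSteps u v A i = 2 * #(A ∩ T) - #T := by
  have hT : ∀ i ∈ T, signSteps u v A i = if i ∈ A then 1 else -1 := fun i hi => by
    have : ¬(i = u ∨ i = v) := by rintro (rfl | rfl) <;> contradiction
    rw [signSteps, if_neg this]
  have hcard := card_filter_add_card_filter_not (s := T) (· ∈ A)
  rw [filter_mem_eq_inter, inter_comm] at hcard
  rw [sum_congr rfl hT, sum_ite, sum_const, sum_const, filter_mem_eq_inter, inter_comm]
  simp only [nsmul_eq_mul, mul_one, mul_neg]
  omega

lemma mem_Ioo_union_compl_Icc_iff {u v i : Fin k} (h : u ≤ v) :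
    i ∈ Ioo u v ∪ (Icc u v)ᶜ ↔ i ≠ u ∧ i ≠ v := by
  rw [Fin.le_def] at h
  simp only [mem_union, mem_Ioo, mem_compl, mem_Icc, Fin.lt_def, Fin.le_def, ne_eq, Fin.ext_iff]
  omega

lemma sum_eq_add_sum_Ioo_add_sum_compl_Icc {M : Type*} [AddCommMonoid M] (s : Fin k → M)
    {u v : Fin k} (h : u < v) :
    ∑ i, s i = s u + s v + ∑ i ∈ Ioo u v, s i + ∑ i ∈ (Icc u v)ᶜ, s i := by
  rw [← sum_add_sum_compl (Icc u v), ← sum_Ioc_add_eq_sum_Icc h.le,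
    ← sum_Ioo_add_eq_sum_Ioc h]
  abel

/-- Sets `A` of up-steps which, with flat steps at `u`, `v` and down-steps elsewhere, make the steps
strictly between `u` and `v` and those outside `[u, v]` both sum to `0`. -/
def balancedUpSets (u v : Fin k) : Finset (Finset (Fin k)) :=
  {A ∈ (Ioo u v ∪ (Icc u v)ᶜ).powerset |
    2 * #(A ∩ Ioo u v) = #(Ioo u v) ∧ 2 * #(A ∩ (Icc u v)ᶜ) = #(Icc u v)ᶜ}

lemma notMem_of_mem_balancedUpSets {u v : Fin k} {A : Finset (Fin k)} (h : u < v)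
    (hA : A ∈ balancedUpSets u v) : u ∉ A ∧ v ∉ A := by
  have hsub : ∀ i ∈ A, i ≠ u ∧ i ≠ v := fun i hi =>
    (mem_Ioo_union_compl_Icc_iff h.le).1 (mem_powerset.1 (mem_filter.1 hA).1 hi)
  exact ⟨fun hu => (hsub u hu).1 rfl, fun hv => (hsub v hv).2 rfl⟩

lemma card_balancedUpSets {u v : Fin k} (h : u < v) :
    #(balancedUpSets u v)
      = balancedCount ((v : ℕ) - u - 1) * balancedCount (k - 2 - ((v : ℕ) - u - 1)) := by
  have hdisj : Disjoint (Ioo u v) (Icc u v)ᶜ :=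
    disjoint_compl_right.mono_left Ioo_subset_Icc_self
  rw [balancedUpSets, card_filter_powerset_union hdisj (fun B => 2 * #B = #(Ioo u v))
    (fun C => 2 * #C = #(Icc u v)ᶜ), card_filter_powerset_two_mul_card_eq,
    card_filter_powerset_two_mul_card_eq, Fin.card_Ioo, card_compl, Fin.card_Icc,
    Fintype.card_fin]
  rw [Fin.lt_def] at h
  congr 2
  omega

lemma isTwoFlatSteps_iff {s : Fin k → ℤ} :
    IsTwoFlatSteps s ↔ ∃ u v, u < v ∧ ∃ A ∈ balancedUpSets u v, signSteps u v A = s := by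
  constructor
  · rintro ⟨hbound, hsum, u, v, huv, hzero, hmid⟩
    have hsign : ∀ i, i ≠ u → i ≠ v → s i = 1 ∨ s i = -1 := fun i hu hv => by
      have := (hzero i).not.2 (by tauto)
      have := abs_le.1 (hbound i)
      omega
    have hs : signSteps u v {i | s i = 1} = s := funext fun i => by
      unfold signSteps
      simp only [mem_filter, mem_univ, true_and]
      by_cases hi : i = u ∨ i = v
      · simp [(hzero i).2 hi, hi]
      · rcases hsign i (by tauto) (by tauto) with h | h <;> simp [h, hi]
    have hu : s u = 0 := (hzero u).2 (.inl rfl)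
    have hv : s v = 0 := (hzero v).2 (.inr rfl)
    have hM := sum_signSteps (A := {i | s i = 1}) (T := Ioo u v) left_notMem_Ioo right_notMem_Ioo
    have hO := sum_signSteps (A := {i | s i = 1}) (T := (Icc u v)ᶜ)
      (notMem_compl.2 (left_mem_Icc.2 huv.le)) (notMem_compl.2 (right_mem_Icc.2 huv.le))
    have htotal := sum_eq_add_sum_Ioo_add_sum_compl_Icc s huv
    rw [hs] at hM hO
    refine ⟨u, v, huv, _,
      mem_filter.2 ⟨mem_powerset.2 fun i hi => ?_, by omega, by omega⟩, hs⟩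
    rw [mem_Ioo_union_compl_Icc_iff huv.le]
    have hi : s i = 1 := (mem_filter.1 hi).2
    exact ⟨fun h => by simp [h, hu] at hi, fun h => by simp [h, hv] at hi⟩
  · rintro ⟨u, v, huv, A, hA, rfl⟩
    obtain ⟨-, hM, hO⟩ := mem_filter.1 hA
    obtain ⟨hu, hv⟩ := notMem_of_mem_balancedUpSets huv hA
    have hzero := signSteps_eq_zero_iff hu hv
    have hsumM := sum_signSteps (A := A) (T := Ioo u v) left_notMem_Ioo right_notMem_Ioo
    have hsumO := sum_signSteps (A := A) (T := (Icc u v)ᶜ)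
      (notMem_compl.2 (left_mem_Icc.2 huv.le)) (notMem_compl.2 (right_mem_Icc.2 huv.le))
    refine ⟨fun i => ?_, ?_, u, v, huv, hzero, by omega⟩
    · unfold signSteps
      split_ifs <;> norm_num
    · rw [sum_eq_add_sum_Ioo_add_sum_compl_Icc _ huv, (hzero u).2 (.inl rfl),
        (hzero v).2 (.inr rfl)]
      omega

def twoFlatCodes (k : ℕ) : Finset ((_ : Fin k × Fin k) × Finset (Fin k)) :=
  ({p | p.1 < p.2} : Finset (Fin k × Fin k)).sigma fun p => balancedUpSets p.1 p.2

lemma signSteps_injOn :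
    Set.InjOn (fun x : (_ : Fin k × Fin k) × Finset (Fin k) => signSteps x.1.1 x.1.2 x.2)
      (twoFlatCodes k) := by
  rintro ⟨⟨u, v⟩, A⟩ hA ⟨⟨u', v'⟩, A'⟩ hA' heq
  simp only [twoFlatCodes, mem_coe, mem_sigma, mem_filter, mem_univ, true_and] at hA hA'
  dsimp only at heq
  obtain ⟨hu, hv⟩ := notMem_of_mem_balancedUpSets hA.1 hA.2
  obtain ⟨hu', hv'⟩ := notMem_of_mem_balancedUpSets hA'.1 hA'.2
  have hpair : ({u, v} : Set (Fin k)) = {u', v'} := Set.ext fun w => by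
    simp only [Set.mem_insert_iff, Set.mem_singleton_iff]
    rw [← signSteps_eq_zero_iff hu hv, ← signSteps_eq_zero_iff hu' hv', congrFun heq w]
  obtain ⟨rfl, rfl⟩ | ⟨rfl, rfl⟩ := Set.pair_eq_pair_iff.1 hpair
  · have : A = A' := ext fun i => by
      rw [← signSteps_eq_one_iff (u := u) (v := v), ← signSteps_eq_one_iff (A := A'), heq]
    rw [this]
  · exact absurd (hA.1.trans hA'.1) (lt_irrefl _)

lemma setOf_isTwoFlatSteps :
    {s : Fin k → ℤ | IsTwoFlatSteps s}
      = ↑((twoFlatCodes k).image fun x => signSteps x.1.1 x.1.2 x.2) := by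
  ext s
  simp [twoFlatCodes, isTwoFlatSteps_iff, and_assoc]

lemma ncard_isGammaTwoFlat : {γ | IsGammaTwoFlat k γ}.ncard = twoFlatCount k := by
  rw [ncard_isGammaTwoFlat_eq_ncard_isTwoFlatSteps, setOf_isTwoFlatSteps, Set.ncard_coe_finset,
    card_image_of_injOn signSteps_injOn, twoFlatCodes, card_sigma, twoFlatCount,
    ← sum_fin_pairs_lt_eq_sum_range (fun d => balancedCount d * balancedCount (k - 2 - d))]
  exact sum_congr rfl fun p hp => card_balancedUpSets (mem_filter.1 hp).2

end LatticePath

theorem stmt5_general (k : ℕ) (hk : Even k) :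
    ({γ : Fin (k + 1) → ℤ | IsGammaTwoFlat k γ}.ncard : ℝ)
      = k * (2 : ℝ) ^ ((k : ℤ) - 3) := by
  rw [LatticePath.ncard_isGammaTwoFlat]
  obtain ⟨m, rfl⟩ := hk
  rcases m with _ | m
  · simp [LatticePath.twoFlatCount]
  have hcount := LatticePath.two_mul_twoFlatCount_add_two (2 * m)
  rw [LatticePath.sum_antidiagonal_balancedCount_two_mul,
    show 2 * m + 2 = m + 1 + (m + 1) by ring] at hcount
  have hpow : (2 : ℝ) ^ (((m + 1 + (m + 1) : ℕ) : ℤ) - 3) = 4 ^ m / 2 := by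
    rw [eq_div_iff two_ne_zero, ← zpow_add_one₀ two_ne_zero,
      show ((m + 1 + (m + 1) : ℕ) : ℤ) - 3 + 1 = ((2 * m : ℕ) : ℤ) by push_cast; ring,
      zpow_natCast, pow_mul]
    norm_num
  rw [hpow, mul_div_assoc', eq_div_iff two_ne_zero, mul_comm]
  exact_mod_cast hcount

theorem stmt5 (k : ℕ) (hk : Even k) (h2 : 2 ≤ k) :
    ({γ : Fin (k + 1) → ℤ | IsGammaTwoFlat k γ}.ncard : ℝ)
      = k * (2 : ℝ) ^ ((k : ℤ) - 3) :=
  stmt5_general k hk
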